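/- arXiv:1911.02552 — 2 statements merged into one kernel-verified Lean document; each statement's English description precedes it below -/
import Mathlib

section
/- Let X be a real locally convex Hausdorff topological vector space with topological dual X*, let (f_i)_{i∈I} be a family of proper functions f_i : X → ℝ∪{+∞} whose robust sum f is proper, let x̄* ∈ X*, let (J,(x_j*)_{j∈J}) ∈ 𝔽(x̄*), and assume min(RP_{x̄*}) = sup(RD_{x̄*}) (the primal value is attained and equals the dual value). Then the following are equivalent: (i) (J,(x_j*)_{j∈J}) is an optimal solution of (RD_{x̄*}); (ii) for every x ∈ sol(RP_{x̄*}), one has J ∈ S_f(x) and x_j* ∈ ∂f_j(x) for all j ∈ J; (iii) there exists x ∈ sol(RP_{x̄*}) with J ∈ S_f(x) and x_j* ∈ ∂f_j(x) for all j ∈ J; (iv) there exists x ∈ X with J ∈ S_f(x) and x_j* ∈ ∂f_j(x) for all j ∈ J. Moreover, for any x ∈ sol(RP_{x̄*}), sol(RD_{x̄*}) = { (J,(x_j*)_{j∈J}) ∈ 𝔽(x̄*) : J ∈ S_f(x) and x_j* ∈ ∂f_j(x) for all j ∈ J }. -/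
/-!
Summing the Fenchel–Young inequalities `x_j*(x) ≤ f_j(x) + f_j*(x_j*)` over `J` and using
`∑_{j ∈ J} f_j ≤ f` gives, for every dual feasible `(J, (x_j*))` and every `x`,
`-∑ f_j*(x_j*) ≤ ∑_{j ∈ J} f_j(x) - x̄*(x) ≤ f(x) - x̄*(x)`, with equality throughout exactly when
`J ∈ S_f(x)` and `x_j* ∈ ∂f_j(x)` for `j ∈ J`. With no duality gap and a primal minimizer `x`,
dual optimality means equality at `x`. Since `f(x)` is finite, so is every term, which is what
allows cancelling in `EReal`.
-/

open scoped Pointwise Topology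
open Set

noncomputable section

variable {X : Type*} [AddCommGroup X] [Module ℝ X] [TopologicalSpace X]
  [IsTopologicalAddGroup X] [ContinuousSMul ℝ X] [LocallyConvexSpace ℝ X] [T2Space X]
variable {ι : Type*}

/-- Fenchel conjugate of `f : X → ℝ ∪ {+∞}` (modeled as `EReal`-valued),
as a function on the topological dual (with its weak* topology). -/
def econj (f : X → EReal) (p : WeakDual ℝ X) : EReal := ⨆ x : X, (p x : EReal) - f x

/-- Effective domain. -/
def edom (f : X → EReal) : Set X := {x | f x ≠ ⊤}

/-- Domain of the conjugate. -/
def edomStar (f : X → EReal) : Set (WeakDual ℝ X) := {p | econj f p ≠ ⊤}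

/-- Epigraph of the conjugate. -/
def epiStar (f : X → EReal) : Set (WeakDual ℝ X × ℝ) := {q | econj f q.1 ≤ (q.2 : EReal)}

/-- Proper function: never `-∞`, not identically `+∞`. -/
def EProper (f : X → EReal) : Prop := (∀ x, f x ≠ ⊥) ∧ ∃ x, f x ≠ ⊤

/-- Convexity of an extended-real-valued function, via its epigraph. -/
def EConvexFn (f : X → EReal) : Prop := Convex ℝ {q : X × ℝ | f q.1 ≤ (q.2 : EReal)}

/-- Robust sum of a family of functions. -/
def rsum (f : ι → X → EReal) (x : X) : EReal :=
  ⨆ (J : Finset ι) (_ : J.Nonempty), ∑ j ∈ J, f j x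

/-- A set is weakly compact if it is compact in the weak topology `σ(X, X*)`. -/
def WCompact (K : Set X) : Prop := IsCompact (toWeakSpace ℝ X '' K)

/-- A subset of a topological space is locally compact if each of its points has
a compact neighborhood (within the set). -/
def IsLocCompactSet {Y : Type*} [TopologicalSpace Y] (S : Set Y) : Prop :=
  ∀ y ∈ S, ∃ K, K ⊆ S ∧ IsCompact K ∧ K ∈ nhdsWithin y S

/-- `g` is weakly inf-locally compact if each sublevel set `[g ≤ r]` is
locally compact in the weak topology `σ(X, X*)`. -/
def WInfLocCompact (g : X → EReal) : Prop :=
  ∀ r : ℝ, IsLocCompactSet (toWeakSpace ℝ X '' {x | g x ≤ (r : EReal)})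

/-- The cone generated by `B ∪ {0}`. -/
def coneHull {Z : Type*} [AddCommGroup Z] [Module ℝ Z] (B : Set Z) : Set Z :=
  {0} ∪ {z | ∃ c : ℝ, 0 < c ∧ ∃ b ∈ B, z = c • b}

/-- Optimal value of the primal problem `(RP_p)`. -/
def primalVal (f : X → EReal) (p : WeakDual ℝ X) : EReal := ⨅ x : X, f x - (p x : EReal)

/-- Optimal solution set of the primal problem `(RP_p)`. -/
def primalSol (f : X → EReal) (p : WeakDual ℝ X) : Set X :=
  {x | f x - (p x : EReal) = primalVal f p}

/-- Feasibility for the dual problem `(RD_p)`. -/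
def dualFeas (p : WeakDual ℝ X) (J : Finset ι) (xs : ι → WeakDual ℝ X) : Prop :=
  J.Nonempty ∧ ∑ j ∈ J, xs j = p

/-- Dual objective. -/
def dualObj (f : ι → X → EReal) (J : Finset ι) (xs : ι → WeakDual ℝ X) : EReal :=
  -∑ j ∈ J, econj (f j) (xs j)

/-- Optimal value of the dual problem `(RD_p)`. -/
def dualVal (f : ι → X → EReal) (p : WeakDual ℝ X) : EReal :=
  ⨆ (J : Finset ι) (xs : ι → WeakDual ℝ X) (_ : dualFeas p J xs), dualObj f J xs

/-- Optimal solutions of the dual problem `(RD_p)`. -/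
def dualSol (f : ι → X → EReal) (p : WeakDual ℝ X) (J : Finset ι)
    (xs : ι → WeakDual ℝ X) : Prop :=
  dualFeas p J xs ∧ dualObj f J xs = dualVal f p

/-- Subdifferential of `f` at `a`. -/
def esubdiff (f : X → EReal) (a : X) : Set (WeakDual ℝ X) :=
  {p | f a ≠ ⊥ ∧ f a ≠ ⊤ ∧ ∀ x, f a + ((p x - p a : ℝ) : EReal) ≤ f x}

/-- `S_f(x)`: nonempty finite subsets realizing the robust sum at `x ∈ dom f`. -/
def Ssets (f : ι → X → EReal) (x : X) : Set (Finset ι) :=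
  {J | J.Nonempty ∧ rsum f x ≠ ⊤ ∧ ∑ j ∈ J, f j x = rsum f x}

/-- `T_f(J)`, the inverse of `S_f`. -/
def Tset (f : ι → X → EReal) (J : Finset ι) : Set X := {x | J ∈ Ssets f x}

/-- `M_g(p) = argmin (g - ⟨p, ·⟩)` when `g*(p)` is finite, `∅` otherwise. -/
def Mmap (g : X → EReal) (p : WeakDual ℝ X) : Set X :=
  {x | econj g p ≠ ⊥ ∧ econj g p ≠ ⊤ ∧ ∀ y, g x - (p x : EReal) ≤ g y - (p y : EReal)}

/-- Support function of a subset of the dual. -/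
def suppFn (A : Set (WeakDual ℝ X)) (x : X) : EReal := ⨆ a ∈ A, ((a : WeakDual ℝ X) x : EReal)

/-- The function `φ` of (2.0). -/
def phiFun (f : ι → X → EReal) (p : WeakDual ℝ X) (q : WeakDual ℝ X) : EReal :=
  ⨅ (J : Finset ι) (xs : ι → WeakDual ℝ X) (_ : dualFeas (q + p) J xs),
    ∑ j ∈ J, econj (f j) (xs j)

/-- Subdifferential of a function on the dual, with subgradients in `X`. -/
def esubdiffStar (φ : WeakDual ℝ X → EReal) (q : WeakDual ℝ X) : Set X :=
  {x | φ q ≠ ⊥ ∧ φ q ≠ ⊤ ∧ ∀ p : WeakDual ℝ X, φ q + ((p x - q x : ℝ) : EReal) ≤ φ p}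

theorem EReal.coe_finset_sum (s : Finset ι) (r : ι → ℝ) :
    ((∑ i ∈ s, r i : ℝ) : EReal) = ∑ i ∈ s, (r i : EReal) :=
  map_sum (⟨⟨Real.toEReal, rfl⟩, EReal.coe_add⟩ : ℝ →+ EReal) r s

theorem EReal.sum_eq_top_of_mem {s : Finset ι} {g : ι → EReal} (hbot : ∀ i ∈ s, g i ≠ ⊥)
    {i : ι} (hi : i ∈ s) (htop : g i = ⊤) : ∑ j ∈ s, g j = ⊤ := by
  classical
  rw [← Finset.add_sum_erase s g hi, htop]
  refine EReal.top_add_of_ne_bot fun h => ?_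
  obtain ⟨j, hj, hjbot⟩ := WithBot.sum_eq_bot_iff.1 h
  exact hbot j (Finset.mem_of_mem_erase hj) hjbot

theorem EReal.ne_bot_and_ne_top_of_sum_eq_coe {s : Finset ι} {g : ι → EReal} {r : ℝ}
    (h : ∑ i ∈ s, g i = r) : ∀ i ∈ s, g i ≠ ⊥ ∧ g i ≠ ⊤ := by
  have hbot : ∀ i ∈ s, g i ≠ ⊥ := fun i hi hgi =>
    EReal.coe_ne_bot r (h ▸ WithBot.sum_eq_bot_iff.2 ⟨i, hi, hgi⟩)
  exact fun i hi => ⟨hbot i hi, fun hgi => EReal.coe_ne_top r (h ▸ sum_eq_top_of_mem hbot hi hgi)⟩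

section OptimalityConditions

omit [IsTopologicalAddGroup X] [ContinuousSMul ℝ X] [LocallyConvexSpace ℝ X] [T2Space X]

theorem WeakDual.finset_sum_apply (s : Finset ι) (xs : ι → WeakDual ℝ X) (x : X) :
    (∑ j ∈ s, xs j) x = ∑ j ∈ s, xs j x :=
  map_sum ((topDualPairing ℝ X).flip x) xs s

theorem sub_le_econj (g : X → EReal) (q : WeakDual ℝ X) (x : X) :
    (q x : EReal) - g x ≤ econj g q :=
  le_iSup (fun y => (q y : EReal) - g y) x

theorem mem_esubdiff_iff_econj_le {g : X → EReal} {q : WeakDual ℝ X} {x : X} {r : ℝ}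
    (hx : g x = r) : q ∈ esubdiff g x ↔ econj g q ≤ ((q x - r : ℝ) : EReal) := by
  simp only [esubdiff, econj, mem_ofPred_eq, hx, EReal.coe_ne_bot, EReal.coe_ne_top, ne_eq,
    not_false_eq_true, true_and, iSup_le_iff]
  refine forall_congr' fun y => ?_
  induction g y using EReal.rec with
  | bot =>
    rw [← EReal.coe_add, EReal.coe_sub_bot, le_bot_iff, top_le_iff]
    exact iff_of_false (EReal.coe_ne_bot _) (EReal.coe_ne_top _)
  | coe s =>
    rw [← EReal.coe_add, ← EReal.coe_sub, EReal.coe_le_coe_iff, EReal.coe_le_coe_iff]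
    constructor <;> intro h <;> linarith
  | top => simp

theorem econj_eq_of_mem_esubdiff {g : X → EReal} {q : WeakDual ℝ X} {x : X} {r : ℝ}
    (hx : g x = r) (h : q ∈ esubdiff g x) : econj g q = ((q x - r : ℝ) : EReal) :=
  le_antisymm ((mem_esubdiff_iff_econj_le hx).1 h) (by simpa [hx] using sub_le_econj g q x)

omit [AddCommGroup X] [Module ℝ X] [TopologicalSpace X] in
theorem sum_le_rsum (f : ι → X → EReal) {J : Finset ι} (hJ : J.Nonempty) (x : X) :
    ∑ j ∈ J, f j x ≤ rsum f x :=
  le_iSup₂_of_le J hJ le_rfl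

theorem dualObj_le_dualVal (f : ι → X → EReal) {p : WeakDual ℝ X} {J : Finset ι}
    {xs : ι → WeakDual ℝ X} (hfeas : dualFeas p J xs) : dualObj f J xs ≤ dualVal f p :=
  le_iSup_of_le J (le_iSup_of_le xs (le_iSup_of_le hfeas le_rfl))

variable {f : ι → X → EReal} {p : WeakDual ℝ X} {J : Finset ι} {xs : ι → WeakDual ℝ X} {x : X}

theorem dualObj_eq_rsum_sub_of_mem_esubdiff (hfeas : dualFeas p J xs) (hS : J ∈ Ssets f x)
    (hsub : ∀ j ∈ J, xs j ∈ esubdiff (f j) x) :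
    dualObj f J xs = rsum f x - (p x : EReal) := by
  set a : ι → ℝ := fun j => (f j x).toReal
  have ha : ∀ j ∈ J, f j x = a j := fun j hj =>
    (EReal.coe_toReal (hsub j hj).2.1 (hsub j hj).1).symm
  have hconj : ∀ j ∈ J, econj (f j) (xs j) = ((xs j x - a j : ℝ) : EReal) := fun j hj =>
    econj_eq_of_mem_esubdiff (ha j hj) (hsub j hj)
  have hrsum : rsum f x = ((∑ j ∈ J, a j : ℝ) : EReal) := by
    rw [← hS.2.2, Finset.sum_congr rfl ha, EReal.coe_finset_sum]
  have hxs : ∑ j ∈ J, xs j x = p x := by rw [← WeakDual.finset_sum_apply, hfeas.2]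
  rw [dualObj, Finset.sum_congr rfl hconj, ← EReal.coe_finset_sum, hrsum, ← EReal.coe_sub,
    ← EReal.coe_neg, Finset.sum_sub_distrib, hxs, neg_sub]

theorem mem_Ssets_and_mem_esubdiff_of_dualObj_eq (hfeas : dualFeas p J xs) {m : ℝ}
    (hm : rsum f x = m) (hobj : dualObj f J xs = ((m - p x : ℝ) : EReal)) :
    J ∈ Ssets f x ∧ ∀ j ∈ J, xs j ∈ esubdiff (f j) x := by
  have hconj_sum : ∑ j ∈ J, econj (f j) (xs j) = ((p x - m : ℝ) : EReal) := by
    rw [← neg_neg (∑ j ∈ J, _), ← dualObj, hobj, ← EReal.coe_neg, neg_sub]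
  have hconj_fin := EReal.ne_bot_and_ne_top_of_sum_eq_coe hconj_sum
  -- a value `f j x = ⊥` would make `x_j*(x) - f j x = ⊤` and hence the conjugate infinite
  have hf_bot : ∀ j ∈ J, f j x ≠ ⊥ := fun j hj hbot => (hconj_fin j hj).2 <| top_le_iff.1 <| by
    simpa [hbot] using sub_le_econj (f j) (xs j) x
  have hf_top : ∀ j ∈ J, f j x ≠ ⊤ := fun j hj htop => EReal.coe_ne_top m <| top_le_iff.1 <|
    EReal.sum_eq_top_of_mem hf_bot hj htop ▸ hm ▸ sum_le_rsum f hfeas.1 x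
  set a : ι → ℝ := fun j => (f j x).toReal
  set c : ι → ℝ := fun j => (econj (f j) (xs j)).toReal
  have ha : ∀ j ∈ J, f j x = a j := fun j hj => (EReal.coe_toReal (hf_top j hj) (hf_bot j hj)).symm
  have hc : ∀ j ∈ J, econj (f j) (xs j) = c j := fun j hj =>
    (EReal.coe_toReal (hconj_fin j hj).2 (hconj_fin j hj).1).symm
  have hfenchel : ∀ j ∈ J, xs j x - a j ≤ c j := fun j hj => by
    have := sub_le_econj (f j) (xs j) x
    rwa [ha j hj, hc j hj, ← EReal.coe_sub, EReal.coe_le_coe_iff] at this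
  have hc_sum : ∑ j ∈ J, c j = p x - m := by
    rwa [Finset.sum_congr rfl hc, ← EReal.coe_finset_sum, EReal.coe_eq_coe_iff] at hconj_sum
  have ha_sum_le : ∑ j ∈ J, a j ≤ m := by
    have := sum_le_rsum f hfeas.1 x
    rwa [Finset.sum_congr rfl ha, ← EReal.coe_finset_sum, hm, EReal.coe_le_coe_iff] at this
  have hfenchel_sum : ∑ j ∈ J, (xs j x - a j) = p x - ∑ j ∈ J, a j := by
    rw [Finset.sum_sub_distrib, ← WeakDual.finset_sum_apply, hfeas.2]
  -- the summed Fenchel–Young inequalities squeeze `∑ a ≤ m` and each of them into equalities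
  have ha_sum : ∑ j ∈ J, a j = m := by
    linarith [Finset.sum_le_sum hfenchel]
  have hfenchel_eq : ∀ j ∈ J, xs j x - a j = c j :=
    (Finset.sum_eq_sum_iff_of_le hfenchel).1 (by rw [hfenchel_sum, hc_sum, ha_sum])
  refine ⟨⟨hfeas.1, hm ▸ EReal.coe_ne_top m, ?_⟩, fun j hj => ?_⟩
  · rw [Finset.sum_congr rfl ha, ← EReal.coe_finset_sum, hm, ha_sum]
  · rw [mem_esubdiff_iff_econj_le (ha j hj), hc j hj, hfenchel_eq j hj]

theorem dualSol_of_mem_Ssets_of_mem_esubdiff (hgap : primalVal (rsum f) p = dualVal f p)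
    (hfeas : dualFeas p J xs) (hS : J ∈ Ssets f x) (hsub : ∀ j ∈ J, xs j ∈ esubdiff (f j) x) :
    dualSol f p J xs := by
  refine ⟨hfeas, le_antisymm (dualObj_le_dualVal f hfeas) ?_⟩
  calc dualVal f p = primalVal (rsum f) p := hgap.symm
    _ ≤ rsum f x - (p x : EReal) := iInf_le _ x
    _ = dualObj f J xs := (dualObj_eq_rsum_sub_of_mem_esubdiff hfeas hS hsub).symm

theorem rsum_ne_top_of_mem_primalSol (hf : ∃ y, rsum f y ≠ ⊤) (hx : x ∈ primalSol (rsum f) p) :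
    rsum f x ≠ ⊤ := by
  obtain ⟨y, hy⟩ := hf
  intro htop
  have hval : primalVal (rsum f) p = ⊤ := by
    rw [← hx, htop, EReal.top_sub_coe]
  have : rsum f y - (p y : EReal) = ⊤ := top_le_iff.1 (hval ▸ iInf_le _ y)
  lift rsum f y to ℝ using ⟨hy, fun hbot => by simp [hbot] at this⟩ with r
  exact EReal.coe_ne_top _ (by rwa [← EReal.coe_sub] at this)

theorem mem_Ssets_and_mem_esubdiff_of_dualSol (hfproper : EProper (rsum f))
    (hgap : primalVal (rsum f) p = dualVal f p) (hds : dualSol f p J xs)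
    (hx : x ∈ primalSol (rsum f) p) :
    J ∈ Ssets f x ∧ ∀ j ∈ J, xs j ∈ esubdiff (f j) x := by
  lift rsum f x to ℝ using ⟨rsum_ne_top_of_mem_primalSol hfproper.2 hx, hfproper.1 x⟩
    with m hm
  refine mem_Ssets_and_mem_esubdiff_of_dualObj_eq hds.1 hm.symm ?_
  rw [hds.2, ← hgap, ← hx, ← hm, EReal.coe_sub]

end OptimalityConditions

theorem dual_solution_characterization_general (f : ι → X → EReal) (p : WeakDual ℝ X)
    (J : Finset ι) (xs : ι → WeakDual ℝ X)
    (hfproper : EProper (rsum f))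
    (hfeas : dualFeas p J xs)
    (hattained : (primalSol (rsum f) p).Nonempty)
    (hgap : primalVal (rsum f) p = dualVal f p) :
    ((dualSol f p J xs ↔
        ∀ x ∈ primalSol (rsum f) p, J ∈ Ssets f x ∧ ∀ j ∈ J, xs j ∈ esubdiff (f j) x) ∧
      (dualSol f p J xs ↔
        ∃ x ∈ primalSol (rsum f) p, J ∈ Ssets f x ∧ ∀ j ∈ J, xs j ∈ esubdiff (f j) x) ∧
      (dualSol f p J xs ↔
        ∃ x : X, J ∈ Ssets f x ∧ ∀ j ∈ J, xs j ∈ esubdiff (f j) x)) ∧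
    (∀ x ∈ primalSol (rsum f) p,
      ∀ (J' : Finset ι) (xs' : ι → WeakDual ℝ X),
        dualSol f p J' xs' ↔
          (dualFeas p J' xs' ∧ J' ∈ Ssets f x ∧ ∀ j ∈ J', xs' j ∈ esubdiff (f j) x)) := by
  obtain ⟨x₀, hx₀⟩ := hattained
  have hnec := fun {J' xs' x} (hds : dualSol f p J' xs') (hx : x ∈ primalSol (rsum f) p) =>
    mem_Ssets_and_mem_esubdiff_of_dualSol hfproper hgap hds hx
  have hsuff := fun {x} (hS : J ∈ Ssets f x) (hsub : ∀ j ∈ J, xs j ∈ esubdiff (f j) x) =>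
    dualSol_of_mem_Ssets_of_mem_esubdiff hgap hfeas hS hsub
  refine ⟨⟨⟨fun hds x hx => hnec hds hx, fun h => hsuff (h x₀ hx₀).1 (h x₀ hx₀).2⟩,
      ⟨fun hds => ⟨x₀, hx₀, hnec hds hx₀⟩, fun ⟨_, _, hS, hsub⟩ => hsuff hS hsub⟩,
      ⟨fun hds => ⟨x₀, hnec hds hx₀⟩, fun ⟨_, hS, hsub⟩ => hsuff hS hsub⟩⟩,
    fun x hx J' xs' => ⟨fun hds => ⟨hds.1, hnec hds hx⟩,
      fun ⟨hfeas', hS, hsub⟩ => dualSol_of_mem_Ssets_of_mem_esubdiff hgap hfeas' hS hsub⟩⟩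

/-- **Corollary 4.3.** Let all `f i` and `f` be proper, `(J, (x_j*)_{j ∈ J}) ∈ 𝔽(x̄*)`, and
assume `min(RP_{x̄*}) = sup(RD_{x̄*})` (the primal value is attained and equals the dual
value). Then (i) `(J, (x_j*)) ∈ sol(RD_{x̄*})`, (ii) every primal solution `x` satisfies
`J ∈ S_f(x)` and `x_j* ∈ ∂f_j(x)` for all `j ∈ J`, (iii) some primal solution does, and
(iv) some `x ∈ X` does, are all equivalent; moreover, for any `x ∈ sol(RP_{x̄*})`,
`sol(RD_{x̄*})` is exactly the set of feasible `(J, (x_j*))` satisfying these conditions. -/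
theorem dual_solution_characterization [Nonempty ι] (f : ι → X → EReal) (p : WeakDual ℝ X)
    (J : Finset ι) (xs : ι → WeakDual ℝ X)
    (hproper : ∀ i, EProper (f i)) (hfproper : EProper (rsum f))
    (hfeas : dualFeas p J xs)
    (hattained : (primalSol (rsum f) p).Nonempty)
    (hgap : primalVal (rsum f) p = dualVal f p) :
    ((dualSol f p J xs ↔
        ∀ x ∈ primalSol (rsum f) p, J ∈ Ssets f x ∧ ∀ j ∈ J, xs j ∈ esubdiff (f j) x) ∧
      (dualSol f p J xs ↔
        ∃ x ∈ primalSol (rsum f) p, J ∈ Ssets f x ∧ ∀ j ∈ J, xs j ∈ esubdiff (f j) x) ∧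
      (dualSol f p J xs ↔
        ∃ x : X, J ∈ Ssets f x ∧ ∀ j ∈ J, xs j ∈ esubdiff (f j) x)) ∧
    (∀ x ∈ primalSol (rsum f) p,
      ∀ (J' : Finset ι) (xs' : ι → WeakDual ℝ X),
        dualSol f p J' xs' ↔
          (dualFeas p J' xs' ∧ J' ∈ Ssets f x ∧ ∀ j ∈ J', xs' j ∈ esubdiff (f j) x)) :=
  dual_solution_characterization_general f p J xs hfproper hfeas hattained hgap
end
end

section
/- Let X be a real locally convex Hausdorff topological vector space with topological dual X*, let (A_i)_{i∈I} be a family of nonempty w*-closed convex subsets of X* with 0_{X*} ∈ ⋂_{i∈I} A_i, and let (t_i)_{i∈I} ⊆ ℝ with sup_{i∈I} t_i ≤ 0. Assume that the robust sum f := Σ^R_{i∈I} (σ_{A_i} − t_i) is proper and that the set 𝒜 := (⋃_{J∈𝓕(I)} Σ_{j∈J} (A_j × {t_j})) + {0_{X*}} × ℝ₊ ⊆ X* × ℝ is w*-closed regarding the set ⋃_{u∈X} ∂f(u). Then for every x ∈ X, ∂f(x) = ⋃_{J ∈ S_f(x)} Σ_{j∈J} argmax_{A_j} ⟨·,x⟩,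 where argmax_{A_j} ⟨·,x⟩ := {a* ∈ A_j : ⟨a*,x⟩ = σ_{A_j}(x)}. -/
open scoped Pointwise Topology
open Set

noncomputable section

variable {X : Type*} [AddCommGroup X] [Module ℝ X] [TopologicalSpace X]
  [IsTopologicalAddGroup X] [ContinuousSMul ℝ X] [LocallyConvexSpace ℝ X] [T2Space X]
variable {ι : Type*}

set_option linter.unusedSectionVars false
set_option maxHeartbeats 1000000

noncomputable instance : LocallyConvexSpace ℝ (WeakDual ℝ X) :=
  WeakBilin.locallyConvexSpace

lemma coeSum (J : Finset ι) (f : ι → ℝ) :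
    ((∑ j ∈ J, f j : ℝ) : EReal) = ∑ j ∈ J, (f j : EReal) :=
  map_sum (⟨⟨(Real.toEReal), EReal.coe_zero⟩, EReal.coe_add⟩ : ℝ →+ EReal) f J

lemma le_suppFn {A : Set (WeakDual ℝ X)} {a : WeakDual ℝ X} (ha : a ∈ A) (x : X) :
    ((a x : ℝ) : EReal) ≤ suppFn A x := le_iSup₂ (f := fun a (_ : a ∈ A) => ((a x : ℝ) : EReal)) a ha

lemma weakDual_sum_apply (J : Finset ι) (w : ι → WeakDual ℝ X) (z : X) :
    (∑ j ∈ J, w j) z = ∑ j ∈ J, w j z :=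
  map_sum ((topDualPairing ℝ X).flip z) w J

lemma weakDual_zero_apply (z : X) : (0 : WeakDual ℝ X) z = 0 := rfl

lemma suppFn_add_le (A : Set (WeakDual ℝ X)) (x y : X) :
    suppFn A (x + y) ≤ suppFn A x + suppFn A y := by
  refine iSup₂_le fun a ha => ?_
  have : ((a (x + y) : ℝ) : EReal) = ((a x : ℝ) : EReal) + ((a y : ℝ) : EReal) := by
    rw [map_add]; exact EReal.coe_add _ _
  rw [this]
  exact add_le_add (le_suppFn ha x) (le_suppFn ha y)

lemma weakdual_dual_eval (φ : WeakDual ℝ X →L[ℝ] ℝ) : ∃ y : X, ∀ q : WeakDual ℝ X, φ q = q y := by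
  classical
  have hinj : Function.Injective (topDualPairing ℝ X) := by
    intro v w h
    ext x
    exact congrFun (congrArg (fun l : X →ₗ[ℝ] ℝ => ⇑l) h) x
  have hemb := WeakBilin.isEmbedding (B := topDualPairing ℝ X) hinj
  have h1 : φ ⁻¹' (Set.Ioo (-1 : ℝ) 1) ∈ 𝓝 (0 : WeakDual ℝ X) := by
    apply φ.continuous.continuousAt.preimage_mem_nhds
    have : φ 0 = 0 := map_zero φ
    rw [this]
    exact isOpen_Ioo.mem_nhds (by norm_num)
  replace h1 := (hemb.isInducing.nhds_eq_comap (0 : X →L[ℝ] ℝ)).ge h1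
  replace h1 := Filter.mem_comap.mp h1
  obtain ⟨U, hU, hUsub⟩ := h1
  have h0fun : (fun y => (topDualPairing ℝ X) 0 y) = (fun _ : X => (0:ℝ)) := by
    funext y; simp
  rw [h0fun, nhds_pi] at hU
  obtain ⟨I, hIfin, tt, htt, hpi⟩ := Filter.mem_pi.mp hU
  have hker : ∀ q : WeakDual ℝ X, (∀ x ∈ I, q x = 0) → φ q = 0 := by
    intro q hq
    by_contra hne
    have habs : ∀ c : ℝ, |c * φ q| < 1 := by
      intro c
      have hmem : (fun y => (topDualPairing ℝ X) (c • q) y) ∈ I.pi tt := by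
        intro x hx
        have : (c • q) x = c * q x := rfl
        simp only [topDualPairing_apply, this, hq x hx, mul_zero]
        convert mem_of_mem_nhds (htt x) using 1
        exact this.trans (by rw [hq x hx, mul_zero])
      have := hUsub (hpi hmem)
      replace this : φ (c • q) ∈ Set.Ioo (-1 : ℝ) 1 := this
      have hphi : φ (c • q) = c * φ q := by rw [map_smul]; rfl
      rw [hphi] at this
      rw [abs_lt]; exact this
    have := habs (2 / φ q)
    rw [div_mul_cancel₀ 2 hne] at this
    norm_num at this
  haveI := hIfin.to_subtype
  haveI := hIfin.fintype
  set L : I → WeakDual ℝ X →ₗ[ℝ] ℝ := fun x => (topDualPairing ℝ X).flip x with hL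
  have hkle : ⨅ i : I, LinearMap.ker (L i) ≤ LinearMap.ker (φ : WeakDual ℝ X →ₗ[ℝ] ℝ) := by
    intro q hq
    rw [Submodule.mem_iInf] at hq
    refine LinearMap.mem_ker.mpr (hker q fun x hx => hq ⟨x, hx⟩)
  have hspan := mem_span_of_iInf_ker_le_ker hkle
  obtain ⟨c, hc⟩ := (Submodule.mem_span_range_iff_exists_fun ℝ).mp hspan
  refine ⟨∑ i : I, c i • (i : X), fun q => ?_⟩
  have h3 := congrArg (fun l : WeakDual ℝ X →ₗ[ℝ] ℝ => l q) hc
  simp only [LinearMap.coe_sum, Finset.sum_apply, LinearMap.smul_apply] at h3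
  have h2 : φ q = ∑ x : I, c x • (L x) q := by rw [h3]; rfl
  rw [h2, map_sum]
  refine Finset.sum_congr rfl fun i _ => ?_
  rw [map_smul]
  rfl

lemma sum_supp_le (A : ι → Set (WeakDual ℝ X)) (hne : ∀ i, (A i).Nonempty)
    (h0 : ∀ i, (0 : WeakDual ℝ X) ∈ A i) (J : Finset ι) (z : X) (M : ℝ)
    (h : ∀ w : ι → WeakDual ℝ X, (∀ j ∈ J, w j ∈ A j) → ∑ j ∈ J, w j z ≤ M) :
    ∑ j ∈ J, suppFn (A j) z ≤ (M : EReal) := by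
  classical
  have hone : ∀ j ∈ J, ∀ a ∈ A j, a z ≤ M := by
    intro j hj a ha
    have hmem : ∀ k ∈ J, (if k = j then a else 0) ∈ A k := by
      intro k hk
      by_cases hkj : k = j
      · rw [if_pos hkj, hkj]; exact ha
      · rw [if_neg hkj]; exact h0 k
    have := h (fun k => if k = j then a else 0) hmem
    have hsum : ∑ k ∈ J, (if k = j then a else 0) z = a z := by
      have : ∀ k, (if k = j then a else 0) z = if k = j then a z else 0 := by
        intro k; by_cases hkj : k = j <;> simp [hkj, weakDual_zero_apply]
      rw [Finset.sum_congr rfl fun k _ => this k, Finset.sum_ite_eq' J j (fun _ => a z),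
        if_pos hj]
    rwa [hsum] at this
  have hfin : ∀ j ∈ J, suppFn (A j) z ≤ (M : EReal) := fun j hj =>
    iSup₂_le fun a ha => EReal.coe_le_coe_iff.mpr (hone j hj a ha)
  have hnbot : ∀ j, suppFn (A j) z ≠ ⊥ := by
    intro j
    obtain ⟨a, ha⟩ := hne j
    exact fun hb => by simpa [hb] using (le_suppFn ha z)
  set u : ι → ℝ := fun j => (suppFn (A j) z).toReal with hu_def
  have hu : ∀ j ∈ J, suppFn (A j) z = (u j : EReal) := fun j hj =>
    (EReal.coe_toReal (((hfin j hj).trans_lt (EReal.coe_lt_top M)).ne) (hnbot j)).symm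
  have hM0 : (0:ℝ) ≤ M := by
    have := h (fun _ => 0) (fun j hj => h0 j)
    simpa [weakDual_zero_apply] using this
  have hsum_u : ∑ j ∈ J, u j ≤ M := by
    by_contra hlt
    push_neg at hlt
    rcases J.eq_empty_or_nonempty with hJ | hJne
    · rw [hJ] at hlt; simp at hlt; linarith
    set ε : ℝ := (∑ j ∈ J, u j - M) / J.card with hε_def
    have hcard : (0:ℝ) < J.card := by exact_mod_cast Finset.card_pos.mpr hJne
    have hε : 0 < ε := div_pos (by linarith) hcard
    have hchoice : ∀ j, ∃ a, a ∈ A j ∧ (j ∈ J → u j - ε < a z) := by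
      intro j
      by_cases hj : j ∈ J
      · have hlt2 : ((u j - ε : ℝ) : EReal) < suppFn (A j) z := by
          rw [hu j hj]; exact_mod_cast sub_lt_self (u j) hε
        rw [suppFn, lt_iSup_iff] at hlt2
        obtain ⟨a, ha⟩ := hlt2
        rw [lt_iSup_iff] at ha
        obtain ⟨haA, haz⟩ := ha
        exact ⟨a, haA, fun _ => EReal.coe_lt_coe_iff.mp haz⟩
      · exact ⟨(hne j).some, (hne j).some_mem, fun hj' => absurd hj' hj⟩
    choose w hwA hwz using hchoice
    have h1 := h w (fun j _ => hwA j)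
    have h2 : ∑ j ∈ J, (u j - ε) < ∑ j ∈ J, w j z :=
      Finset.sum_lt_sum_of_nonempty hJne (fun j hj => hwz j hj)
    have h3 : ∑ j ∈ J, (u j - ε) = ∑ j ∈ J, u j - J.card * ε := by
      rw [Finset.sum_sub_distrib, Finset.sum_const, nsmul_eq_mul]
    have h4 : (J.card : ℝ) * ε = ∑ j ∈ J, u j - M := by
      rw [hε_def]; field_simp
    rw [h3, h4] at h2
    linarith
  calc ∑ j ∈ J, suppFn (A j) z = ∑ j ∈ J, ((u j : ℝ) : EReal) := Finset.sum_congr rfl hu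
    _ = ((∑ j ∈ J, u j : ℝ) : EReal) := (coeSum J u).symm
    _ ≤ (M : EReal) := EReal.coe_le_coe_iff.mpr hsum_u

lemma mem_Aset_iff (A : ι → Set (WeakDual ℝ X)) (t : ι → ℝ) (u : WeakDual ℝ X × ℝ) :
    u ∈ (⋃ J ∈ {J : Finset ι | J.Nonempty}, ∑ j ∈ J, (A j ×ˢ ({t j} : Set ℝ))) +
        (({0} : Set (WeakDual ℝ X)) ×ˢ Set.Ici (0 : ℝ)) ↔
      ∃ J : Finset ι, J.Nonempty ∧ ∃ w : ι → WeakDual ℝ X, (∀ j ∈ J, w j ∈ A j) ∧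
        ∃ ρ : ℝ, 0 ≤ ρ ∧ u = (∑ j ∈ J, w j, ∑ j ∈ J, t j + ρ) := by
  rw [Set.mem_add]
  constructor
  · rintro ⟨b, hb, c, hc, hbc⟩
    rw [Set.mem_iUnion₂] at hb
    obtain ⟨J, hJ, hbJ⟩ := hb
    rw [Set.mem_finset_sum] at hbJ
    obtain ⟨w, hw, hwb⟩ := hbJ
    rw [Set.mem_prod] at hc
    obtain ⟨hc1, hc2⟩ := hc
    refine ⟨J, hJ, fun j => (w j).1, fun j hj => ((Set.mem_prod).mp (hw hj)).1, c.2, hc2, ?_⟩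
    have hb1 : b.1 = ∑ j ∈ J, (w j).1 := by rw [← hwb, Prod.fst_sum]
    have hb2 : b.2 = ∑ j ∈ J, t j := by
      rw [← hwb, Prod.snd_sum]
      exact Finset.sum_congr rfl fun j hj => ((Set.mem_prod).mp (hw hj)).2
    have hc1' : c.1 = 0 := hc1
    ext
    · simp [← hbc, hb1, hc1']
    · simp [← hbc, hb2]
  · rintro ⟨J, hJ, w, hw, ρ, hρ, rfl⟩
    refine ⟨(∑ j ∈ J, w j, ∑ j ∈ J, t j), ?_, (0, ρ), ?_, by ext <;> simp⟩
    · rw [Set.mem_iUnion₂]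
      refine ⟨J, hJ, ?_⟩
      rw [Set.mem_finset_sum]
      refine ⟨fun j => (w j, t j), fun {j} hj => ⟨hw j hj, rfl⟩, ?_⟩
      rw [Prod.ext_iff, Prod.fst_sum, Prod.snd_sum]
      exact ⟨rfl, rfl⟩
    · exact ⟨rfl, hρ⟩

lemma Aset_convex (A : ι → Set (WeakDual ℝ X)) (t : ι → ℝ)
    (hconv : ∀ i, Convex ℝ (A i)) (h0 : ∀ i, (0 : WeakDual ℝ X) ∈ A i) (ht : ∀ i, t i ≤ 0) :
    Convex ℝ ((⋃ J ∈ {J : Finset ι | J.Nonempty}, ∑ j ∈ J, (A j ×ˢ ({t j} : Set ℝ))) +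
        (({0} : Set (WeakDual ℝ X)) ×ˢ Set.Ici (0 : ℝ))) := by
  classical
  intro u hu v hv θ₁ θ₂ hθ₁ hθ₂ hθ
  rw [mem_Aset_iff] at hu hv ⊢
  obtain ⟨J₁, hJ₁, w₁, hw₁, ρ₁, hρ₁, hu⟩ := hu
  obtain ⟨J₂, hJ₂, w₂, hw₂, ρ₂, hρ₂, hv⟩ := hv
  set a : ι → WeakDual ℝ X := fun j => if j ∈ J₁ then w₁ j else 0 with ha_def
  set b : ι → WeakDual ℝ X := fun j => if j ∈ J₂ then w₂ j else 0 with hb_def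
  set J : Finset ι := J₁ ∪ J₂ with hJ_def
  refine ⟨J, hJ₁.mono Finset.subset_union_left, fun j => θ₁ • a j + θ₂ • b j, ?_, ?_⟩
  · intro j hj
    have haj : a j ∈ A j := by
      by_cases h : j ∈ J₁
      · simp only [ha_def, if_pos h]; exact hw₁ j h
      · simp only [ha_def, if_neg h]; exact h0 j
    have hbj : b j ∈ A j := by
      by_cases h : j ∈ J₂
      · simp only [hb_def, if_pos h]; exact hw₂ j h
      · simp only [hb_def, if_neg h]; exact h0 j
    exact hconv j haj hbj hθ₁ hθ₂ hθ
  · have hsa : ∑ j ∈ J, a j = ∑ j ∈ J₁, w₁ j := by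
      rw [ha_def]
      rw [Finset.sum_ite_mem, Finset.inter_eq_right.mpr Finset.subset_union_left]
    have hsb : ∑ j ∈ J, b j = ∑ j ∈ J₂, w₂ j := by
      rw [hb_def]
      rw [Finset.sum_ite_mem, Finset.inter_eq_right.mpr Finset.subset_union_right]
    have ht1 : ∑ j ∈ J₁, t j - ∑ j ∈ J, t j = - ∑ j ∈ J \ J₁, t j := by
      rw [← Finset.sum_sdiff (Finset.subset_union_left (s₂ := J₂))]; ring
    have ht2 : ∑ j ∈ J₂, t j - ∑ j ∈ J, t j = - ∑ j ∈ J \ J₂, t j := by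
      rw [← Finset.sum_sdiff (Finset.subset_union_right (s₁ := J₁))]; ring
    have hd1 : (0:ℝ) ≤ ∑ j ∈ J₁, t j - ∑ j ∈ J, t j := by
      rw [ht1]
      simp only [neg_nonneg]
      exact Finset.sum_nonpos fun j _ => ht j
    have hd2 : (0:ℝ) ≤ ∑ j ∈ J₂, t j - ∑ j ∈ J, t j := by
      rw [ht2]
      simp only [neg_nonneg]
      exact Finset.sum_nonpos fun j _ => ht j
    refine ⟨θ₁ * (ρ₁ + (∑ j ∈ J₁, t j - ∑ j ∈ J, t j)) +
            θ₂ * (ρ₂ + (∑ j ∈ J₂, t j - ∑ j ∈ J, t j)), ?_, ?_⟩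
    · have := mul_nonneg hθ₁ (add_nonneg hρ₁ hd1)
      have := mul_nonneg hθ₂ (add_nonneg hρ₂ hd2)
      linarith
    · have hsum : ∑ j ∈ J, (θ₁ • a j + θ₂ • b j) = θ₁ • (∑ j ∈ J₁, w₁ j) + θ₂ • (∑ j ∈ J₂, w₂ j) := by
        rw [Finset.sum_add_distrib, ← Finset.smul_sum, ← Finset.smul_sum, hsa, hsb]
      ext
      · simp only [hu, hv, Prod.fst_add, Prod.smul_fst, hsum]
      · simp only [hu, hv, Prod.snd_add, Prod.smul_snd, smul_eq_mul]
        have h1 : θ₁ + θ₂ = 1 := hθ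
        have hkey : θ₁ * ∑ j ∈ J, t j + θ₂ * ∑ j ∈ J, t j = ∑ j ∈ J, t j := by
          rw [← add_mul, h1, one_mul]
        ring_nf
        ring_nf at hkey
        linarith


/-- **Proposition 5.4 (subdifferential of a robust sum of subaffine functions).** Let
`(A i)_{i ∈ ι}` be nonempty `w*`-closed convex subsets of `X*` with `0 ∈ ⋂ i, A i`,
`sup_i t i ≤ 0`, and assume `f := Σ^R (σ_{A_i} − t_i)` is proper and
`𝒜 = (⋃_{J ∈ 𝓕(ι)} Σ_{j ∈ J} (A j × {t j})) + {0} × ℝ₊` is `w*`-closed regarding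
`⋃_{u ∈ X} ∂f(u)`. Then for every `x`,
`∂f(x) = ⋃_{J ∈ S_f(x)} Σ_{j ∈ J} argmax_{A j} ⟨·, x⟩`. -/
theorem subaffine_subdiff_formula [Nonempty ι]
    (A : ι → Set (WeakDual ℝ X)) (t : ι → ℝ)
    (hne : ∀ i, (A i).Nonempty) (hclosed : ∀ i, IsClosed (A i))
    (hconv : ∀ i, Convex ℝ (A i)) (h0 : ∀ i, (0 : WeakDual ℝ X) ∈ A i)
    (ht : ∀ i, t i ≤ 0)
    (hproper : EProper (rsum (fun i x => suppFn (A i) x - (t i : EReal))))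
    (hclreg :
      letI 𝒜 : Set (WeakDual ℝ X × ℝ) :=
        (⋃ J ∈ {J : Finset ι | J.Nonempty}, ∑ j ∈ J, (A j ×ˢ ({t j} : Set ℝ))) +
          (({0} : Set (WeakDual ℝ X)) ×ˢ Set.Ici (0 : ℝ))
      letI B : Set (WeakDual ℝ X × ℝ) :=
        (⋃ u : X, esubdiff (rsum (fun i x => suppFn (A i) x - (t i : EReal))) u) ×ˢ
          (Set.univ : Set ℝ)
      B ∩ closure 𝒜 = B ∩ 𝒜) :
    ∀ x : X, esubdiff (rsum (fun i x => suppFn (A i) x - (t i : EReal))) x =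
      ⋃ J ∈ Ssets (fun i x => suppFn (A i) x - (t i : EReal)) x,
        ∑ j ∈ J, {a : WeakDual ℝ X | a ∈ A j ∧ ((a x : ℝ) : EReal) = suppFn (A j) x} := by
  
  classical
  intro x
  set g : ι → X → EReal := fun i y => suppFn (A i) y - (t i : EReal) with hg_def
  have hsumle : ∀ (J : Finset ι), J.Nonempty → ∀ y, ∑ j ∈ J, g j y ≤ rsum g y := by
    intro J hJ y
    exact le_iSup₂ (f := fun (J : Finset ι) (_ : J.Nonempty) => ∑ j ∈ J, g j y) J hJ
  have hsupp_nbot : ∀ i (y : X), suppFn (A i) y ≠ ⊥ := by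
    intro i y
    obtain ⟨a, ha⟩ := hne i
    intro hb
    simpa [hb] using le_suppFn ha y
  have hcoe_le_g : ∀ i (y : X), ∀ a ∈ A i, ((a y - t i : ℝ) : EReal) ≤ g i y := by
    intro i y a ha
    simp only [hg_def]
    rw [EReal.coe_sub]
    exact EReal.sub_le_sub (le_suppFn ha y) le_rfl
  ext p
  constructor
  · intro hp
    obtain ⟨hbot, htop, hsub⟩ := hp
    set F : ℝ := (rsum g x).toReal with hF_def
    have hF : rsum g x = (F : EReal) := (EReal.coe_toReal htop hbot).symm
    have hsupp_fin : ∀ j, suppFn (A j) x ≠ ⊤ := by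
      intro j hj
      have h1 := hsumle {j} (Finset.singleton_nonempty j) x
      rw [Finset.sum_singleton, hF] at h1
      simp only [hg_def] at h1
      rw [hj, EReal.top_sub_coe] at h1
      exact (EReal.coe_ne_top F) (top_le_iff.mp h1)
    set s : ι → ℝ := fun j => (suppFn (A j) x).toReal with hs_def
    have hs : ∀ j, suppFn (A j) x = ((s j : ℝ) : EReal) := fun j =>
      (EReal.coe_toReal (hsupp_fin j) (hsupp_nbot j x)).symm
    have hgx : ∀ j, g j x = ((s j - t j : ℝ) : EReal) := by
      intro j
      simp only [hg_def]
      rw [hs j, ← EReal.coe_sub]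
    have hgsum : ∀ J : Finset ι, ∑ j ∈ J, g j x = ((∑ j ∈ J, (s j - t j) : ℝ) : EReal) := by
      intro J
      rw [coeSum]
      exact Finset.sum_congr rfl fun j _ => hgx j
    set α : ℝ := p x - F with hα_def
    set 𝒜 : Set (WeakDual ℝ X × ℝ) :=
      (⋃ J ∈ {J : Finset ι | J.Nonempty}, ∑ j ∈ J, (A j ×ˢ ({t j} : Set ℝ))) +
        (({0} : Set (WeakDual ℝ X)) ×ˢ Set.Ici (0 : ℝ)) with h𝒜_def
    have hcl : ((p, α) : WeakDual ℝ X × ℝ) ∈ closure 𝒜 := by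
      by_contra hout
      obtain ⟨φ₀, u₀, hφ₀pt, hφ₀set⟩ :=
        geometric_hahn_banach_point_closed ((Aset_convex A t hconv h0 ht).closure)
          isClosed_closure hout
      set φ : WeakDual ℝ X × ℝ →L[ℝ] ℝ := -φ₀ with hφ_def
      set u' : ℝ := -u₀ with hu'_def
      have hset : ∀ b ∈ 𝒜, φ b < u' := by
        intro b hb
        have := hφ₀set b (subset_closure hb)
        simp only [hφ_def, hu'_def, ContinuousLinearMap.neg_apply]
        linarith
      have hpt : u' < φ (p, α) := by
        simp only [hφ_def, hu'_def, ContinuousLinearMap.neg_apply]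
        linarith
      obtain ⟨y, hy⟩ := weakdual_dual_eval (φ.comp (ContinuousLinearMap.inl ℝ (WeakDual ℝ X) ℝ))
      set r : ℝ := φ (0, 1) with hr_def
      have hdecomp : ∀ (q : WeakDual ℝ X) (c : ℝ), φ (q, c) = q y + c * r := by
        intro q c
        have h1 : ((q, c) : WeakDual ℝ X × ℝ) = (q, 0) + (0, c) := by
          simp [Prod.ext_iff]
        have h2 : ((0, c) : WeakDual ℝ X × ℝ) = c • ((0 : WeakDual ℝ X), (1 : ℝ)) := by
          simp [Prod.ext_iff]
        rw [h1, map_add, h2, map_smul, smul_eq_mul, ← hr_def]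
        congr 1
        have := hy q
        rwa [ContinuousLinearMap.comp_apply, ContinuousLinearMap.inl_apply] at this
      have helem : ∀ J : Finset ι, J.Nonempty → ∀ w : ι → WeakDual ℝ X,
          (∀ j ∈ J, w j ∈ A j) → ∀ ρ : ℝ, 0 ≤ ρ →
          (∑ j ∈ J, (w j) y) + (∑ j ∈ J, t j + ρ) * r < u' := by
        intro J hJ w hw ρ hρ
        have hmem : ((∑ j ∈ J, w j, ∑ j ∈ J, t j + ρ) : WeakDual ℝ X × ℝ) ∈ 𝒜 := by
          rw [h𝒜_def, mem_Aset_iff]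
          exact ⟨J, hJ, w, hw, ρ, hρ, rfl⟩
        have := hset _ hmem
        rwa [hdecomp, weakDual_sum_apply] at this
      have hrle : r ≤ 0 := by
        by_contra hrpos
        push_neg at hrpos
        have i₀ : ι := Classical.arbitrary ι
        obtain ⟨a₀, ha₀⟩ := hne i₀
        set ρ : ℝ := max 0 ((u' - a₀ y - t i₀ * r) / r + 1) with hρ_def
        have hρ0 : (0:ℝ) ≤ ρ := le_max_left _ _
        have h1 := helem {i₀} (Finset.singleton_nonempty i₀) (fun _ => a₀)
          (fun j hj => by rw [Finset.mem_singleton] at hj; rw [hj]; exact ha₀) ρ hρ0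
        rw [Finset.sum_singleton, Finset.sum_singleton] at h1
        have h2 : (u' - a₀ y - t i₀ * r) / r + 1 ≤ ρ := le_max_right _ _
        have h3 : (u' - a₀ y - t i₀ * r) / r * r = u' - a₀ y - t i₀ * r :=
          div_mul_cancel₀ _ (ne_of_gt hrpos)
        have h4 := mul_le_mul_of_nonneg_right h2 (le_of_lt hrpos)
        have h5 : ((u' - a₀ y - t i₀ * r) / r + 1) * r = (u' - a₀ y - t i₀ * r) + r := by
          rw [add_mul, h3, one_mul]
        have h6 : (t i₀ + ρ) * r = t i₀ * r + ρ * r := by ring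
        rw [h6] at h1
        rw [h5] at h4
        linarith
      rcases hrle.lt_or_eq with hrneg | hr0
      · -- r < 0
        set c : ℝ := (-r)⁻¹ with hc_def
        have hcpos : 0 < c := inv_pos.mpr (by linarith)
        have hcr : c * r = -1 := by
          rw [hc_def]
          field_simp
          rw [div_self (show r ≠ 0 by linarith)]
        set z : X := c • y with hz_def
        have happz : ∀ q : WeakDual ℝ X, q z = c * q y := by
          intro q
          rw [hz_def, map_smul, smul_eq_mul]
        have hb2 : ∀ J : Finset ι, J.Nonempty →
            ∑ j ∈ J, suppFn (A j) z ≤ ((c * u' + ∑ j ∈ J, t j : ℝ) : EReal) := by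
          intro J hJ
          refine sum_supp_le A hne h0 J z _ ?_
          intro w hw
          have h1 := helem J hJ w hw 0 le_rfl
          rw [add_zero] at h1
          have h2 : ∑ j ∈ J, (w j) z = c * ∑ j ∈ J, (w j) y := by
            rw [Finset.mul_sum]
            exact Finset.sum_congr rfl fun j _ => happz (w j)
          have h3 := mul_lt_mul_of_pos_left h1 hcpos
          have h4 : c * (∑ j ∈ J, (w j) y + (∑ j ∈ J, t j) * r)
              = c * ∑ j ∈ J, (w j) y + (c * r) * ∑ j ∈ J, t j := by ring
          rw [h4, hcr] at h3
          rw [h2]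
          linarith
        have hfz : rsum g z ≤ ((c * u' : ℝ) : EReal) := by
          refine iSup₂_le fun J hJ => ?_
          have hterm : ∀ j ∈ J, g j z = suppFn (A j) z + ((- t j : ℝ) : EReal) := by
            intro j _
            simp only [hg_def]
            rw [sub_eq_add_neg, EReal.coe_neg]
          have h1 : ∑ j ∈ J, g j z
              = ∑ j ∈ J, suppFn (A j) z + ((- ∑ j ∈ J, t j : ℝ) : EReal) := by
            rw [Finset.sum_congr rfl hterm, Finset.sum_add_distrib, ← coeSum]
            congr 2
            rw [Finset.sum_neg_distrib]
          rw [h1]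
          calc ∑ j ∈ J, suppFn (A j) z + ((- ∑ j ∈ J, t j : ℝ) : EReal)
              ≤ ((c * u' + ∑ j ∈ J, t j : ℝ) : EReal) + ((- ∑ j ∈ J, t j : ℝ) : EReal) :=
                add_le_add_left (hb2 J hJ) _
            _ = ((c * u' : ℝ) : EReal) := by
                rw [← EReal.coe_add]
                congr 1
                ring
        have h2 : ((F + (p z - p x) : ℝ) : EReal) ≤ ((c * u' : ℝ) : EReal) := by
          calc ((F + (p z - p x) : ℝ) : EReal)
              = (F : EReal) + ((p z - p x : ℝ) : EReal) := EReal.coe_add _ _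
            _ ≤ rsum g z := by rw [← hF]; exact hsub z
            _ ≤ _ := hfz
        have h3 : F + (p z - p x) ≤ c * u' := EReal.coe_le_coe_iff.mp h2
        rw [hdecomp] at hpt
        have h5 := mul_lt_mul_of_pos_left hpt hcpos
        have h6 : c * (p y + α * r) = c * p y + (c * r) * α := by ring
        rw [h6, hcr] at h5
        have h4 : p z = c * p y := happz p
        rw [hα_def] at h5
        linarith
      · -- r = 0
        have hb1 : ∀ J : Finset ι, J.Nonempty →
            ∑ j ∈ J, suppFn (A j) y ≤ (u' : EReal) := by
          intro J hJ
          refine sum_supp_le A hne h0 J y _ ?_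
          intro w hw
          have h1 := helem J hJ w hw 0 le_rfl
          rw [hr0, mul_zero, add_zero] at h1
          exact le_of_lt h1
        have hfxy : rsum g (x + y) ≤ ((F + u' : ℝ) : EReal) := by
          refine iSup₂_le fun J hJ => ?_
          have hterm : ∀ j ∈ J, g j (x + y) ≤ g j x + suppFn (A j) y := by
            intro j _
            simp only [hg_def]
            rw [sub_eq_add_neg, sub_eq_add_neg]
            calc suppFn (A j) (x + y) + ((-(t j) : ℝ) : EReal)
                ≤ (suppFn (A j) x + suppFn (A j) y) + ((-(t j) : ℝ) : EReal) :=
                  add_le_add_left (suppFn_add_le (A j) x y) _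
              _ = suppFn (A j) x + ((-(t j) : ℝ) : EReal) + suppFn (A j) y := by
                  rw [add_right_comm]
          calc ∑ j ∈ J, g j (x + y)
              ≤ ∑ j ∈ J, (g j x + suppFn (A j) y) := Finset.sum_le_sum hterm
            _ = ∑ j ∈ J, g j x + ∑ j ∈ J, suppFn (A j) y := Finset.sum_add_distrib
            _ ≤ (F : EReal) + (u' : EReal) :=
                add_le_add (by rw [← hF]; exact hsumle J hJ x) (hb1 J hJ)
            _ = ((F + u' : ℝ) : EReal) := (EReal.coe_add _ _).symm
        have h2 : ((F + (p (x + y) - p x) : ℝ) : EReal) ≤ ((F + u' : ℝ) : EReal) := by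
          calc ((F + (p (x + y) - p x) : ℝ) : EReal)
              = (F : EReal) + ((p (x + y) - p x : ℝ) : EReal) := EReal.coe_add _ _
            _ ≤ rsum g (x + y) := by rw [← hF]; exact hsub (x + y)
            _ ≤ _ := hfxy
        have h3 : F + (p (x + y) - p x) ≤ F + u' := EReal.coe_le_coe_iff.mp h2
        have h4 : p (x + y) = p x + p y := map_add p x y
        rw [hdecomp, hr0, mul_zero, add_zero] at hpt
        linarith
    have hclreg' :
        (((⋃ u : X, esubdiff (rsum g) u) ×ˢ (Set.univ : Set ℝ)) ∩ closure 𝒜)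
          = ((⋃ u : X, esubdiff (rsum g) u) ×ˢ (Set.univ : Set ℝ)) ∩ 𝒜 := hclreg
    have hmemB : ((p, α) : WeakDual ℝ X × ℝ)
        ∈ (⋃ u : X, esubdiff (rsum g) u) ×ˢ (Set.univ : Set ℝ) := by
      refine ⟨?_, trivial⟩
      exact Set.mem_iUnion.mpr ⟨x, ⟨hbot, htop, hsub⟩⟩
    have hmemA : ((p, α) : WeakDual ℝ X × ℝ) ∈ 𝒜 := by
      have h5 : ((p, α) : WeakDual ℝ X × ℝ)
          ∈ ((⋃ u : X, esubdiff (rsum g) u) ×ˢ (Set.univ : Set ℝ)) ∩ closure 𝒜 := ⟨hmemB, hcl⟩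
      rw [hclreg'] at h5
      exact h5.2
    rw [h𝒜_def, mem_Aset_iff] at hmemA
    obtain ⟨J, hJne, w, hw, ρ, hρ, heq⟩ := hmemA
    have hp1 : p = ∑ j ∈ J, w j := congrArg Prod.fst heq
    have hp2 : α = ∑ j ∈ J, t j + ρ := congrArg Prod.snd heq
    have hwx : ∀ j ∈ J, (w j) x ≤ s j := by
      intro j hj
      have := le_suppFn (hw j hj) x
      rw [hs j] at this
      exact EReal.coe_le_coe_iff.mp this
    have hpx : p x = ∑ j ∈ J, (w j) x := by rw [hp1, weakDual_sum_apply]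
    have hFsum : ∑ j ∈ J, (s j - t j) ≤ F := by
      have := hsumle J hJne x
      rw [hgsum J, hF] at this
      exact EReal.coe_le_coe_iff.mp this
    have hchain : ∑ j ∈ J, (w j) x - ∑ j ∈ J, t j = F + ρ := by
      have h5 : p x - F = ∑ j ∈ J, t j + ρ := by rw [← hp2, hα_def]
      rw [← hpx]
      linarith
    have hsum_le1 : ∑ j ∈ J, ((w j) x - t j) ≤ ∑ j ∈ J, (s j - t j) :=
      Finset.sum_le_sum (fun j hj => by have := hwx j hj; linarith)
    have hsplit : ∑ j ∈ J, ((w j) x - t j) = ∑ j ∈ J, (w j) x - ∑ j ∈ J, t j :=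
      Finset.sum_sub_distrib _ _
    have hρ0 : ρ = 0 := by linarith
    have h6 : ∑ j ∈ J, (s j - t j) = ∑ j ∈ J, s j - ∑ j ∈ J, t j := Finset.sum_sub_distrib _ _
    have hsum_eq2 : ∑ j ∈ J, (w j) x = ∑ j ∈ J, s j := by linarith
    have hterm : ∀ j ∈ J, (w j) x = s j :=
      (Finset.sum_eq_sum_iff_of_le (fun i hi => hwx i hi)).mp hsum_eq2
    have hSmem : J ∈ Ssets g x := by
      refine ⟨hJne, htop, ?_⟩
      rw [hgsum J, hF]
      have h7 : ∑ j ∈ J, (s j - t j) = F := by linarith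
      rw [h7]
    rw [Set.mem_iUnion₂]
    refine ⟨J, hSmem, ?_⟩
    rw [Set.mem_finset_sum]
    refine ⟨w, fun {j} hj => ⟨hw j hj, ?_⟩, hp1.symm⟩
    rw [hterm j hj, hs j]
  · intro hp
    rw [Set.mem_iUnion₂] at hp
    obtain ⟨J, hJS, hpJ⟩ := hp
    obtain ⟨hJne, htop, hsum⟩ := hJS
    rw [Set.mem_finset_sum] at hpJ
    obtain ⟨w, hw, hwp⟩ := hpJ
    have hwA : ∀ j ∈ J, w j ∈ A j := fun j hj => (hw hj).1
    have hwmax : ∀ j ∈ J, ((w j x : ℝ) : EReal) = suppFn (A j) x := fun j hj => (hw hj).2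
    have hgx : ∀ j ∈ J, g j x = (((w j) x - t j : ℝ) : EReal) := by
      intro j hj
      simp only [hg_def]
      rw [← hwmax j hj, ← EReal.coe_sub]
    have hfx : rsum g x = ((∑ j ∈ J, ((w j) x - t j) : ℝ) : EReal) := by
      rw [← hsum, coeSum]
      exact Finset.sum_congr rfl hgx
    have hpx : ∀ z : X, p z = ∑ j ∈ J, (w j) z := by
      intro z
      rw [← hwp, weakDual_sum_apply]
    refine ⟨?_, htop, ?_⟩
    · rw [hfx]; exact EReal.coe_ne_bot _
    · intro z
      rw [hfx]
      have h1 : ((∑ j ∈ J, ((w j) x - t j) : ℝ) : EReal) + ((p z - p x : ℝ) : EReal)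
          = ((∑ j ∈ J, ((w j) z - t j) : ℝ) : EReal) := by
        rw [← EReal.coe_add]
        congr 1
        rw [hpx z, hpx x, Finset.sum_sub_distrib, Finset.sum_sub_distrib]
        ring
      rw [h1]
      calc ((∑ j ∈ J, ((w j) z - t j) : ℝ) : EReal)
          = ∑ j ∈ J, (((w j) z - t j : ℝ) : EReal) := coeSum _ _
        _ ≤ ∑ j ∈ J, g j z := Finset.sum_le_sum fun j hj => hcoe_le_g j z (w j) (hwA j hj)
        _ ≤ rsum g z := hsumle J hJne z
end
end
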